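/- arXiv:1410.2531 — 2 statements merged into one kernel-verified Lean document; each statement's English description precedes it below -/
import Mathlib

section
/- Let (Ω, F, P) be a probability space, T > 0, and β₁ > 1, β₂ > 1 real constants. Let c₁, c₂, γ : Ω × [0,T] → ℝ be jointly measurable with c₁, c₂ ≥ 0 and γ > 0 pointwise, and set α₁(ω,t) = γ(ω,t) + β₁c₁(ω,t)² + β₂c₂(ω,t)² and p₁(ω,t) = exp(∫₀^t α₁(ω,s) ds), assumed finite for a.e. ω. Let f : Ω × [0,T] × ℝ^d × ℝ^{d×k} → ℝ^d be jointly measurable satisfying |f(ω,t,y₁,z₁) − f(ω,t,y₂,z₂)| ≤ c₁(ω,t)|y₁ − y₂| + c₂(ω,t)|z₁ − z₂| for all y₁, y₂ ∈ ℝ^d, z₁, z₂ ∈ ℝ^{d×k}, (ω,t)-a.e. Let φ : Ω × [0,T] → ℝ^d and ψ : Ω × [0,T] → ℝ^{d×k} be jointly measurable, and assume E∫₀^T p₁|φ|² dt, E∫₀^T p₁|ψ|² dt and E∫₀^T p₁|f(·,t,0,0)|²/α₁ dt are all finite. Then E[ |∫₀^T f(ω,s,φ(ω,s),ψ(ω,s))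 ds|² ] ≤ (3/β₁)·E∫₀^T p₁|φ|² ds + (3/β₂)·E∫₀^T p₁|ψ|² ds + 3·E∫₀^T p₁|f(·,s,0,0)|²/α₁ ds; in particular the left-hand side is finite. -/
/-!
Fix ω, let `F = f(ω, ·, φ, ψ)` and `A t = ∫₀ᵗ α₁`, so that `p₁ = exp A`. Cauchy–Schwarz with the
weight `α₁ exp (-A)` gives `|∫₀ᵀ F|² ≤ (∫₀ᵀ α₁ exp (-A)) · ∫₀ᵀ p₁ |F|² / α₁`. The first factor is
at most `1`: `α₁ exp (-A)` is a.e. the derivative of the monotone function `-exp (-A)`, and the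
integral of the derivative of a monotone function is at most its increment, here
`1 - exp (-A T)`. The Lipschitz bound `|F| ≤ c₁|φ| + c₂|ψ| + |f(0, 0)|`, the inequality
`(a + b + c)² ≤ 3 (a² + b² + c²)` and `βᵢ cᵢ² ≤ α₁` bound `p₁ |F|² / α₁` termwise, and the
estimate follows by integrating over ω.
-/

open MeasureTheory ProbabilityTheory intervalIntegral
open Set Real
open scoped ENNReal

theorem ENNReal.lintegral_sq_le_lintegral_mul_lintegral_sq_div {X : Type*} [MeasurableSpace X]
    {μ : Measure X} {f w : X → ℝ≥0∞} (hf : AEMeasurable f μ) (hw : AEMeasurable w μ)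
    (hw₀ : ∀ x, w x ≠ 0) (hw_top : ∀ x, w x ≠ ∞) :
    (∫⁻ x, f x ∂μ) ^ 2 ≤ (∫⁻ x, w x ∂μ) * ∫⁻ x, f x ^ 2 / w x ∂μ := by
  have hsplit : ∀ x, f x = w x ^ (1 / 2 : ℝ) * (f x ^ 2 / w x) ^ (1 / 2 : ℝ) := fun x => by
    rw [← ENNReal.mul_rpow_of_nonneg _ _ (by norm_num), ENNReal.mul_div_cancel (hw₀ x) (hw_top x),
      ← ENNReal.rpow_natCast, ← ENNReal.rpow_mul]
    norm_num
  have hHolder := ENNReal.lintegral_mul_norm_pow_le hw ((hf.pow_const 2).div hw)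
    (p := 1 / 2) (q := 1 / 2) (by norm_num) (by norm_num) (by norm_num)
  calc (∫⁻ x, f x ∂μ) ^ 2
      = (∫⁻ x, w x ^ (1 / 2 : ℝ) * (f x ^ 2 / w x) ^ (1 / 2 : ℝ) ∂μ) ^ 2 := by
        simp_rw [← hsplit]
    _ ≤ ((∫⁻ x, w x ∂μ) ^ (1 / 2 : ℝ) * (∫⁻ x, f x ^ 2 / w x ∂μ) ^ (1 / 2 : ℝ)) ^ 2 := by
        gcongr
        exact hHolder
    _ = (∫⁻ x, w x ∂μ) * ∫⁻ x, f x ^ 2 / w x ∂μ := by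
        rw [← ENNReal.mul_rpow_of_nonneg _ _ (by norm_num), ← ENNReal.rpow_natCast,
          ← ENNReal.rpow_mul]
        norm_num

theorem integral_mul_exp_neg_primitive_le_one {α : ℝ → ℝ} {T : ℝ} (hT : 0 ≤ T)
    (hα : ∀ t, 0 ≤ α t) (hint : IntervalIntegrable α volume 0 T) :
    ∫ t in 0..T, α t * exp (-∫ s in 0..t, α s) ≤ 1 := by
  set A := fun t => ∫ s in 0..t, α s
  have hmono : MonotoneOn (fun t => -exp (-A t)) (uIcc 0 T) := by
    rw [uIcc_of_le hT]
    intro x hx y hy hxy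
    simp only [neg_le_neg_iff, exp_le_exp]
    exact integral_mono_interval le_rfl hx.1 hxy (ae_of_all _ hα)
      (hint.mono_set (by rw [uIcc_of_le hT, uIcc_of_le hy.1]; exact Icc_subset_Icc le_rfl hy.2))
  have hderiv : ∫ t in 0..T, α t * exp (-A t) = ∫ t in 0..T, deriv (fun t => -exp (-A t)) t := by
    refine integral_congr_ae ?_
    filter_upwards [hint.ae_hasDerivAt_integral] with t ht htT
    have hA : HasDerivAt A (α t) t := ht (uIoc_subset_uIcc htT) 0 left_mem_uIcc
    have hg : HasDerivAt (fun t => -exp (-A t)) (α t * exp (-A t)) t := by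
      simpa [mul_comm] using hA.fun_neg.exp.fun_neg
    exact hg.deriv.symm
  have hFTC := hmono.intervalIntegral_deriv_mem_uIcc.2
  rw [← hderiv] at hFTC
  refine hFTC.trans (max_le zero_le_one ?_)
  simp [A, (exp_pos _).le]

theorem continuousOn_exp_neg_primitive {α : ℝ → ℝ} {T : ℝ} (hT : 0 ≤ T)
    (hint : IntegrableOn α (Icc 0 T)) :
    ContinuousOn (fun t => exp (-∫ s in 0..t, α s)) (Icc 0 T) := by
  have := continuousOn_primitive_interval (μ := volume) (a := 0) (b := T) (f := α)
  rw [uIcc_of_le hT] at this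
  exact (this hint).neg.rexp

theorem lintegral_mul_exp_neg_primitive_le_one {α : ℝ → ℝ} {T : ℝ} (hT : 0 ≤ T)
    (hα : ∀ t, 0 ≤ α t) (hint : IntegrableOn α (Icc 0 T)) :
    ∫⁻ t in Icc 0 T, ENNReal.ofReal (α t * exp (-∫ s in 0..t, α s)) ≤ 1 := by
  rw [← ofReal_integral_eq_lintegral_ofReal
    (hint.mul_continuousOn (continuousOn_exp_neg_primitive hT hint) isCompact_Icc)
    (ae_of_all _ fun t => mul_nonneg (hα t) (exp_pos _).le), integral_Icc_eq_integral_Ioc,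
    ← integral_of_le hT, ← ENNReal.ofReal_one]
  exact ENNReal.ofReal_le_ofReal <| integral_mul_exp_neg_primitive_le_one hT hα
    ((intervalIntegrable_iff_integrableOn_Icc_of_le hT).2 hint)

theorem ofReal_sq_norm_intervalIntegral_le {E : Type*} [NormedAddCommGroup E] [NormedSpace ℝ E]
    {T : ℝ} (hT : 0 ≤ T) {α : ℝ → ℝ} (hα : ∀ t, 0 < α t) (hint : IntegrableOn α (Icc 0 T))
    {F : ℝ → E} (hF : AEStronglyMeasurable F (volume.restrict (Icc 0 T))) :
    ENNReal.ofReal (‖∫ t in 0..T, F t‖ ^ 2) ≤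
      ∫⁻ t in Icc 0 T, ENNReal.ofReal (exp (∫ s in 0..t, α s) * ‖F t‖ ^ 2 / α t) := by
  set w : ℝ → ℝ≥0∞ := fun t => ENNReal.ofReal (α t * exp (-∫ s in 0..t, α s))
  have hw₀ : ∀ t, w t ≠ 0 := fun t =>
    (ENNReal.ofReal_pos.2 (mul_pos (hα t) (exp_pos _))).ne'
  have hw : AEMeasurable w (volume.restrict (Icc 0 T)) :=
    (hint.aemeasurable.mul ((continuousOn_exp_neg_primitive hT hint).aemeasurable
      measurableSet_Icc)).ennreal_ofReal
  have hquot : ∀ t, ‖F t‖ₑ ^ 2 / w t =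
      ENNReal.ofReal (exp (∫ s in 0..t, α s) * ‖F t‖ ^ 2 / α t) := fun t => by
    rw [← ofReal_norm, ← ENNReal.ofReal_pow (norm_nonneg _),
      ← ENNReal.ofReal_div_of_pos (mul_pos (hα t) (exp_pos _)), exp_neg]
    congr 1
    field_simp
  calc ENNReal.ofReal (‖∫ t in 0..T, F t‖ ^ 2)
      = ‖∫ t in Ioc 0 T, F t‖ₑ ^ 2 := by
        rw [integral_of_le hT, ENNReal.ofReal_pow (norm_nonneg _), ofReal_norm]
    _ ≤ (∫⁻ t in Icc 0 T, ‖F t‖ₑ) ^ 2 := by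
        gcongr
        exact (enorm_integral_le_lintegral_enorm _).trans (lintegral_mono_set Ioc_subset_Icc_self)
    _ ≤ (∫⁻ t in Icc 0 T, w t) * ∫⁻ t in Icc 0 T, ‖F t‖ₑ ^ 2 / w t :=
        ENNReal.lintegral_sq_le_lintegral_mul_lintegral_sq_div hF.enorm hw hw₀
          fun t => ENNReal.ofReal_ne_top
    _ ≤ ∫⁻ t in Icc 0 T, ‖F t‖ₑ ^ 2 / w t := by
        grw [lintegral_mul_exp_neg_primitive_le_one hT (fun t => (hα t).le) hint, one_mul]
    _ = _ := by simp_rw [hquot]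

theorem measurable_intervalIntegral_primitive {Ω : Type*} [MeasurableSpace Ω] {f : Ω → ℝ → ℝ}
    (hf : Measurable (Function.uncurry f)) (a : ℝ) :
    Measurable fun q : Ω × ℝ => ∫ s in a..q.2, f q.1 s := by
  have hIoc : ∀ l u : Ω × ℝ → ℝ, Measurable l → Measurable u →
      Measurable fun q => ∫ s in Ioc (l q) (u q), f q.1 s := by
    intro l u hl hu
    have hind : Measurable fun p : (Ω × ℝ) × ℝ => (Ioc (l p.1) (u p.1)).indicator (f p.1.1) p.2 :=
      Measurable.ite ((measurableSet_lt (hl.comp measurable_fst) measurable_snd).inter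
          (measurableSet_le measurable_snd (hu.comp measurable_fst)))
        (hf.comp (measurable_fst.fst.prodMk measurable_snd)) measurable_const
    simp_rw [← MeasureTheory.integral_indicator measurableSet_Ioc]
    exact (hind.stronglyMeasurable.integral_prod_right' (ν := volume)).measurable
  simp only [intervalIntegral]
  exact (hIoc _ _ measurable_const measurable_snd).sub (hIoc _ _ measurable_snd measurable_const)

theorem mul_sq_div_le_of_le_add {β₁ β₂ c₁ c₂ a p w x y z : ℝ} (hβ₁ : 0 < β₁) (hβ₂ : 0 < β₂)
    (ha : 0 < a) (hp : 0 ≤ p) (h₁ : β₁ * c₁ ^ 2 ≤ a) (h₂ : β₂ * c₂ ^ 2 ≤ a) (hw₀ : 0 ≤ w)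
    (hw : w ≤ c₁ * x + c₂ * y + z) :
    p * w ^ 2 / a ≤ 3 / β₁ * (p * x ^ 2) + 3 / β₂ * (p * y ^ 2) + 3 * (p * z ^ 2 / a) := by
  have hsq : w ^ 2 ≤ 3 * (c₁ ^ 2 * x ^ 2) + 3 * (c₂ ^ 2 * y ^ 2) + 3 * z ^ 2 := by
    nlinarith [sq_nonneg (c₁ * x - c₂ * y), sq_nonneg (c₁ * x - z), sq_nonneg (c₂ * y - z)]
  have hc₁ : c₁ ^ 2 / a ≤ 1 / β₁ := by
    rw [div_le_div_iff₀ ha hβ₁]; linarith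
  have hc₂ : c₂ ^ 2 / a ≤ 1 / β₂ := by
    rw [div_le_div_iff₀ ha hβ₂]; linarith
  calc p * w ^ 2 / a
      ≤ p * (3 * (c₁ ^ 2 * x ^ 2) + 3 * (c₂ ^ 2 * y ^ 2) + 3 * z ^ 2) / a := by gcongr
    _ = 3 * (p * x ^ 2) * (c₁ ^ 2 / a) + 3 * (p * y ^ 2) * (c₂ ^ 2 / a) + 3 * (p * z ^ 2 / a) := by
        ring
    _ ≤ 3 * (p * x ^ 2) * (1 / β₁) + 3 * (p * y ^ 2) * (1 / β₂) + 3 * (p * z ^ 2 / a) := by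
        gcongr
    _ = _ := by ring

theorem lintegral_const_mul_add_three {X : Type*} [MeasurableSpace X] {μ : Measure X}
    {f g h : X → ℝ≥0∞} (hf : Measurable f) (hg : Measurable g) (hh : Measurable h)
    (a b c : ℝ≥0∞) :
    ∫⁻ x, (a * f x + b * g x + c * h x) ∂μ =
      a * ∫⁻ x, f x ∂μ + b * ∫⁻ x, g x ∂μ + c * ∫⁻ x, h x ∂μ := by
  rw [lintegral_add_left ((hf.const_mul a).fun_add (hg.const_mul b)),
    lintegral_add_left (hf.const_mul a), lintegral_const_mul a hf, lintegral_const_mul b hg,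
    lintegral_const_mul c hh]

theorem lintegral_lintegral_const_mul_add_three {Ω X : Type*} [MeasurableSpace Ω]
    [MeasurableSpace X] {μ : Measure Ω} {ν : Measure X} [SFinite ν] {f g h : Ω → X → ℝ≥0∞}
    (hf : Measurable (Function.uncurry f)) (hg : Measurable (Function.uncurry g))
    (hh : Measurable (Function.uncurry h)) (a b c : ℝ≥0∞) :
    ∫⁻ ω, ∫⁻ x, (a * f ω x + b * g ω x + c * h ω x) ∂ν ∂μ =
      a * ∫⁻ ω, ∫⁻ x, f ω x ∂ν ∂μ + b * ∫⁻ ω, ∫⁻ x, g ω x ∂ν ∂μ + c * ∫⁻ ω, ∫⁻ x, h ω x ∂ν ∂μ := by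
  rw [lintegral_congr fun ω => lintegral_const_mul_add_three hf.of_uncurry_left
    hg.of_uncurry_left (hh.of_uncurry_left (x := ω)) a b c]
  exact lintegral_const_mul_add_three hf.lintegral_prod_right hg.lintegral_prod_right
    hh.lintegral_prod_right a b c

theorem norm_le_add_of_norm_sub_le {Y Z G : Type*} [SeminormedAddGroup Y]
    [SeminormedAddGroup Z] [SeminormedAddGroup G] {g : Y → Z → G} {c₁ c₂ : ℝ}
    (h : ∀ y₁ y₂ z₁ z₂, ‖g y₁ z₁ - g y₂ z₂‖ ≤ c₁ * ‖y₁ - y₂‖ + c₂ * ‖z₁ - z₂‖) (y : Y) (z : Z) :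
    ‖g y z‖ ≤ c₁ * ‖y‖ + c₂ * ‖z‖ + ‖g 0 0‖ := by
  have := h y 0 z 0
  rw [sub_zero, sub_zero] at this
  linarith [norm_le_insert' (g y z) (g 0 0)]

theorem lintegral_sq_norm_intervalIntegral_le {Ω E : Type*} [MeasurableSpace Ω] {μ : Measure Ω}
    [NormedAddCommGroup E] [NormedSpace ℝ E] {T β₁ β₂ : ℝ} (hT : 0 ≤ T) (hβ₁ : 0 < β₁)
    (hβ₂ : 0 < β₂) {c₁ c₂ α : Ω → ℝ → ℝ} (hαm : Measurable (Function.uncurry α))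
    (hα : ∀ ω t, 0 < α ω t) (hc₁ : ∀ ω t, β₁ * c₁ ω t ^ 2 ≤ α ω t)
    (hc₂ : ∀ ω t, β₂ * c₂ ω t ^ 2 ≤ α ω t) (hint : ∀ᵐ ω ∂μ, IntegrableOn (α ω) (Icc 0 T))
    {F : Ω → ℝ → E} (hF : ∀ ω, AEStronglyMeasurable (F ω) (volume.restrict (Icc 0 T)))
    {Φ Ψ N : Ω → ℝ → ℝ} (hΦ : Measurable (Function.uncurry Φ))
    (hΨ : Measurable (Function.uncurry Ψ)) (hN : Measurable (Function.uncurry N))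
    (hFle : ∀ᵐ ω ∂μ, ∀ᵐ t ∂volume.restrict (Icc 0 T),
      ‖F ω t‖ ≤ c₁ ω t * Φ ω t + c₂ ω t * Ψ ω t + N ω t) :
    ∫⁻ ω, ENNReal.ofReal (‖∫ t in 0..T, F ω t‖ ^ 2) ∂μ ≤
      ENNReal.ofReal (3 / β₁) *
          ∫⁻ ω, ∫⁻ t in Icc 0 T, ENNReal.ofReal (exp (∫ s in 0..t, α ω s) * Φ ω t ^ 2) ∂volume ∂μ +
        ENNReal.ofReal (3 / β₂) *
          ∫⁻ ω, ∫⁻ t in Icc 0 T, ENNReal.ofReal (exp (∫ s in 0..t, α ω s) * Ψ ω t ^ 2) ∂volume ∂μ +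
        3 * ∫⁻ ω, ∫⁻ t in Icc 0 T,
          ENNReal.ofReal (exp (∫ s in 0..t, α ω s) * N ω t ^ 2 / α ω t) ∂volume ∂μ := by
  have hp := (measurable_intervalIntegral_primitive hαm 0).exp
  calc ∫⁻ ω, ENNReal.ofReal (‖∫ t in 0..T, F ω t‖ ^ 2) ∂μ
      ≤ ∫⁻ ω, ∫⁻ t in Icc 0 T,
          (ENNReal.ofReal (3 / β₁) * ENNReal.ofReal (exp (∫ s in 0..t, α ω s) * Φ ω t ^ 2) +
            ENNReal.ofReal (3 / β₂) * ENNReal.ofReal (exp (∫ s in 0..t, α ω s) * Ψ ω t ^ 2) +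
            3 * ENNReal.ofReal (exp (∫ s in 0..t, α ω s) * N ω t ^ 2 / α ω t)) ∂volume ∂μ := by
        refine lintegral_mono_ae ?_
        filter_upwards [hint, hFle] with ω hintω hFleω
        refine (ofReal_sq_norm_intervalIntegral_le hT (hα ω) hintω (hF ω)).trans
          (lintegral_mono_ae ?_)
        filter_upwards [hFleω] with t ht
        grw [mul_sq_div_le_of_le_add hβ₁ hβ₂ (hα ω t) (exp_pos _).le (hc₁ ω t) (hc₂ ω t)
          (norm_nonneg _) ht, ENNReal.ofReal_add_le, ENNReal.ofReal_add_le,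
          ENNReal.ofReal_mul (div_pos three_pos hβ₁).le,
          ENNReal.ofReal_mul (div_pos three_pos hβ₂).le, ENNReal.ofReal_mul zero_le_three,
          ENNReal.ofReal_ofNat]
    _ = _ := lintegral_lintegral_const_mul_add_three (by fun_prop) (by fun_prop) (by fun_prop) _ _ _

theorem stmt_4_general {Ω : Type*} [MeasureSpace Ω]
    (T : ℝ) (hT : 0 < T) (d k : ℕ)
    (β₁ β₂ : ℝ) (hβ₁ : 1 < β₁) (hβ₂ : 1 < β₂)
    (c₁ c₂ γ : Ω → ℝ → ℝ)
    (hc₁m : Measurable (Function.uncurry c₁))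
    (hc₂m : Measurable (Function.uncurry c₂))
    (hγm : Measurable (Function.uncurry γ))
    (hγ : ∀ ω t, 0 < γ ω t)
    (α₁ p₁ : Ω → ℝ → ℝ)
    (hα₁ : α₁ = fun ω t => γ ω t + β₁ * c₁ ω t ^ 2 + β₂ * c₂ ω t ^ 2)
    (hp₁ : p₁ = fun ω t => Real.exp (∫ s in (0 : ℝ)..t, α₁ ω s))
    (hα₁int : ∀ᵐ ω ∂ℙ, IntegrableOn (α₁ ω) (Set.Icc 0 T))
    (f : Ω → ℝ → EuclideanSpace ℝ (Fin d) → EuclideanSpace ℝ (Fin d × Fin k) →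
      EuclideanSpace ℝ (Fin d))
    (hfm : Measurable (fun q : Ω × ℝ × EuclideanSpace ℝ (Fin d) ×
      EuclideanSpace ℝ (Fin d × Fin k) => f q.1 q.2.1 q.2.2.1 q.2.2.2))
    (hLip : ∀ᵐ q ∂((ℙ : Measure Ω).prod (volume.restrict (Set.Icc (0 : ℝ) T))),
      ∀ y₁ y₂ : EuclideanSpace ℝ (Fin d), ∀ z₁ z₂ : EuclideanSpace ℝ (Fin d × Fin k),
        ‖f q.1 q.2 y₁ z₁ - f q.1 q.2 y₂ z₂‖ ≤
          c₁ q.1 q.2 * ‖y₁ - y₂‖ + c₂ q.1 q.2 * ‖z₁ - z₂‖)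
    (φ : Ω → ℝ → EuclideanSpace ℝ (Fin d))
    (ψ : Ω → ℝ → EuclideanSpace ℝ (Fin d × Fin k))
    (hφm : Measurable (Function.uncurry φ)) (hψm : Measurable (Function.uncurry ψ))
    (hφint : (∫⁻ ω, ∫⁻ t in Set.Icc (0 : ℝ) T,
      ENNReal.ofReal (p₁ ω t * ‖φ ω t‖ ^ 2) ∂volume ∂ℙ) < ⊤)
    (hψint : (∫⁻ ω, ∫⁻ t in Set.Icc (0 : ℝ) T,
      ENNReal.ofReal (p₁ ω t * ‖ψ ω t‖ ^ 2) ∂volume ∂ℙ) < ⊤)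
    (hfint : (∫⁻ ω, ∫⁻ t in Set.Icc (0 : ℝ) T,
      ENNReal.ofReal (p₁ ω t * ‖f ω t 0 0‖ ^ 2 / α₁ ω t) ∂volume ∂ℙ) < ⊤) :
    (∫⁻ ω, ENNReal.ofReal (‖∫ s in (0 : ℝ)..T, f ω s (φ ω s) (ψ ω s)‖ ^ 2) ∂ℙ) ≤
        ENNReal.ofReal (3 / β₁) * (∫⁻ ω, ∫⁻ t in Set.Icc (0 : ℝ) T,
          ENNReal.ofReal (p₁ ω t * ‖φ ω t‖ ^ 2) ∂volume ∂ℙ) +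
        ENNReal.ofReal (3 / β₂) * (∫⁻ ω, ∫⁻ t in Set.Icc (0 : ℝ) T,
          ENNReal.ofReal (p₁ ω t * ‖ψ ω t‖ ^ 2) ∂volume ∂ℙ) +
        3 * (∫⁻ ω, ∫⁻ t in Set.Icc (0 : ℝ) T,
          ENNReal.ofReal (p₁ ω t * ‖f ω t 0 0‖ ^ 2 / α₁ ω t) ∂volume ∂ℙ) ∧
    (∫⁻ ω, ENNReal.ofReal (‖∫ s in (0 : ℝ)..T, f ω s (φ ω s) (ψ ω s)‖ ^ 2) ∂ℙ) < ⊤ := by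
  subst hp₁
  have hc₁α : ∀ ω t, β₁ * c₁ ω t ^ 2 ≤ α₁ ω t := fun ω t => by
    rw [hα₁]; nlinarith [hγ ω t, sq_nonneg (c₂ ω t)]
  have hc₂α : ∀ ω t, β₂ * c₂ ω t ^ 2 ≤ α₁ ω t := fun ω t => by
    rw [hα₁]; nlinarith [hγ ω t, sq_nonneg (c₁ ω t)]
  have hαpos : ∀ ω t, 0 < α₁ ω t := fun ω t => by
    rw [hα₁]; nlinarith [hγ ω t, sq_nonneg (c₁ ω t), sq_nonneg (c₂ ω t)]
  have hαm : Measurable (Function.uncurry α₁) := by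
    rw [hα₁]
    exact (hγm.add ((hc₁m.pow_const 2).const_mul β₁)).add ((hc₂m.pow_const 2).const_mul β₂)
  have hf₀m : Measurable fun q : Ω × ℝ => f q.1 q.2 0 0 :=
    hfm.comp (measurable_fst.prodMk (measurable_snd.prodMk
      (measurable_const.prodMk measurable_const)))
  have hFm : Measurable fun q : Ω × ℝ => f q.1 q.2 (φ q.1 q.2) (ψ q.1 q.2) :=
    hfm.comp (measurable_fst.prodMk (measurable_snd.prodMk (hφm.prodMk hψm)))
  have hbound := lintegral_sq_norm_intervalIntegral_le (Φ := fun ω t => ‖φ ω t‖)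
    (Ψ := fun ω t => ‖ψ ω t‖) (N := fun ω t => ‖f ω t 0 0‖) hT.le (by linarith) (by linarith) hαm
    hαpos hc₁α hc₂α hα₁int (fun ω => (hFm.comp measurable_prodMk_left).aestronglyMeasurable)
    hφm.norm hψm.norm hf₀m.norm ((Measure.ae_ae_of_ae_prod hLip).mono fun ω hω =>
      hω.mono fun t ht => norm_le_add_of_norm_sub_le ht _ _)
  exact ⟨hbound, hbound.trans_lt (by finiteness)⟩

/-- the a-priori estimate (3.3) of Lemma 3.1(i) under conditions A1:
E|∫₀ᵀ f(s,φ,ψ) ds|² ≤ (3/β₁) E∫₀ᵀ p₁|φ|² + (3/β₂) E∫₀ᵀ p₁|ψ|²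
+ 3 E∫₀ᵀ p₁|f(·,0,0)|²/α₁, and in particular the left-hand side is finite. -/
theorem stmt_4 {Ω : Type*} [MeasureSpace Ω] [IsProbabilityMeasure (ℙ : Measure Ω)]
    (T : ℝ) (hT : 0 < T) (d k : ℕ)
    (β₁ β₂ : ℝ) (hβ₁ : 1 < β₁) (hβ₂ : 1 < β₂)
    (c₁ c₂ γ : Ω → ℝ → ℝ)
    (hc₁m : Measurable (Function.uncurry c₁))
    (hc₂m : Measurable (Function.uncurry c₂))
    (hγm : Measurable (Function.uncurry γ))
    (hc₁ : ∀ ω t, 0 ≤ c₁ ω t) (hc₂ : ∀ ω t, 0 ≤ c₂ ω t) (hγ : ∀ ω t, 0 < γ ω t)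
    (α₁ p₁ : Ω → ℝ → ℝ)
    (hα₁ : α₁ = fun ω t => γ ω t + β₁ * c₁ ω t ^ 2 + β₂ * c₂ ω t ^ 2)
    (hp₁ : p₁ = fun ω t => Real.exp (∫ s in (0 : ℝ)..t, α₁ ω s))
    (hα₁int : ∀ᵐ ω ∂ℙ, IntegrableOn (α₁ ω) (Set.Icc 0 T))
    (f : Ω → ℝ → EuclideanSpace ℝ (Fin d) → EuclideanSpace ℝ (Fin d × Fin k) →
      EuclideanSpace ℝ (Fin d))
    (hfm : Measurable (fun q : Ω × ℝ × EuclideanSpace ℝ (Fin d) ×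
      EuclideanSpace ℝ (Fin d × Fin k) => f q.1 q.2.1 q.2.2.1 q.2.2.2))
    (hLip : ∀ᵐ q ∂((ℙ : Measure Ω).prod (volume.restrict (Set.Icc (0 : ℝ) T))),
      ∀ y₁ y₂ : EuclideanSpace ℝ (Fin d), ∀ z₁ z₂ : EuclideanSpace ℝ (Fin d × Fin k),
        ‖f q.1 q.2 y₁ z₁ - f q.1 q.2 y₂ z₂‖ ≤
          c₁ q.1 q.2 * ‖y₁ - y₂‖ + c₂ q.1 q.2 * ‖z₁ - z₂‖)
    (φ : Ω → ℝ → EuclideanSpace ℝ (Fin d))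
    (ψ : Ω → ℝ → EuclideanSpace ℝ (Fin d × Fin k))
    (hφm : Measurable (Function.uncurry φ)) (hψm : Measurable (Function.uncurry ψ))
    (hφint : (∫⁻ ω, ∫⁻ t in Set.Icc (0 : ℝ) T,
      ENNReal.ofReal (p₁ ω t * ‖φ ω t‖ ^ 2) ∂volume ∂ℙ) < ⊤)
    (hψint : (∫⁻ ω, ∫⁻ t in Set.Icc (0 : ℝ) T,
      ENNReal.ofReal (p₁ ω t * ‖ψ ω t‖ ^ 2) ∂volume ∂ℙ) < ⊤)
    (hfint : (∫⁻ ω, ∫⁻ t in Set.Icc (0 : ℝ) T,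
      ENNReal.ofReal (p₁ ω t * ‖f ω t 0 0‖ ^ 2 / α₁ ω t) ∂volume ∂ℙ) < ⊤) :
    (∫⁻ ω, ENNReal.ofReal (‖∫ s in (0 : ℝ)..T, f ω s (φ ω s) (ψ ω s)‖ ^ 2) ∂ℙ) ≤
        ENNReal.ofReal (3 / β₁) * (∫⁻ ω, ∫⁻ t in Set.Icc (0 : ℝ) T,
          ENNReal.ofReal (p₁ ω t * ‖φ ω t‖ ^ 2) ∂volume ∂ℙ) +
        ENNReal.ofReal (3 / β₂) * (∫⁻ ω, ∫⁻ t in Set.Icc (0 : ℝ) T,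
          ENNReal.ofReal (p₁ ω t * ‖ψ ω t‖ ^ 2) ∂volume ∂ℙ) +
        3 * (∫⁻ ω, ∫⁻ t in Set.Icc (0 : ℝ) T,
          ENNReal.ofReal (p₁ ω t * ‖f ω t 0 0‖ ^ 2 / α₁ ω t) ∂volume ∂ℙ) ∧
    (∫⁻ ω, ENNReal.ofReal (‖∫ s in (0 : ℝ)..T, f ω s (φ ω s) (ψ ω s)‖ ^ 2) ∂ℙ) < ⊤ :=
  stmt_4_general T hT d k β₁ β₂ hβ₁ hβ₂ c₁ c₂ γ hc₁m hc₂m hγm hγ α₁ p₁ hα₁ hp₁ hα₁int f hfm hLip φ ψ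
    hφm hψm hφint hψint hfint
end

section
/- Let (Ω, F, P) be a probability space, T > 0, and real constants β̄₁ > 4 and β̄₂ > 90β̄₁²/(β̄₁² − 16). Let c₁, c₂, γ̄ : Ω × [0,T] → ℝ be jointly measurable with c₁, c₂ ≥ 0 and γ̄ > 0 pointwise, and set α₂(ω,t) = γ̄(ω,t) + β̄₁c₁(ω,t) + β̄₂c₂(ω,t)² and p₂(ω,t) = exp(∫₀^t α₂(ω,s) ds), assumed finite for a.e. ω. Let f : Ω × [0,T] × ℝ^d × ℝ^{d×k} → ℝ^d be jointly measurable satisfying |f(ω,t,y₁,z₁) − f(ω,t,y₂,z₂)| ≤ c₁(ω,t)|y₁ − y₂| + c₂(ω,t)|z₁ − z₂| for all y₁, y₂ ∈ ℝ^d, z₁, z₂ ∈ ℝ^{d×k}, (ω,t)-a.e. Let φ : Ω × [0,T] → ℝ^d and ψ : Ω × [0,T] → ℝ^{d×k} be jointly measurable, and assume E∫₀^T p₂ α₂ |φ|² dt, E∫₀^T p₂|ψ|² dt and E∫₀^T p₂|f(·,t,0,0)|²/α₂ dt are all finite. Then E[ |∫₀^T f(ω,s,φ(ω,s),ψ(ω,s))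 ds|² ] ≤ (3/β̄₁²)·E∫₀^T p₂ α₂ |φ|² ds + (3/β̄₂)·E∫₀^T p₂|ψ|² ds + 3·E∫₀^T p₂|f(·,s,0,0)|²/α₂ ds; in particular the left-hand side is finite. -/
open MeasureTheory ProbabilityTheory intervalIntegral
open Set

/-!
Fix `ω` and write `w = α₂ ω`, `A t = ∫₀ᵗ w`, so that `p₂ ω = exp ∘ A`. The function `-exp (-A)` is
monotone with derivative `w · exp (-A)` almost everywhere, hence `∫₀ᵀ w · exp (-A) ≤ 1`. The
Lipschitz condition gives `‖f(s, φ, ψ)‖ ≤ G := c₁ ‖φ‖ + c₂ ‖ψ‖ + ‖f(s, 0, 0)‖`, and the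
Cauchy–Schwarz inequality with weight `w · exp (-A)` then gives
`‖∫₀ᵀ f(s, φ, ψ) ds‖² ≤ ∫₀ᵀ G² exp A / w`. Now
`G² ≤ 3 (c₁² ‖φ‖² + c₂² ‖ψ‖² + ‖f(s, 0, 0)‖²)` together with `β̄₁ c₁ ≤ α₂` and `β̄₂ c₂² ≤ α₂`
splits the right-hand side into the three terms of the estimate, which is then integrated over `ω`.
-/

lemma ENNReal.sq_lintegral_mul_le {α : Type*} [MeasurableSpace α] {μ : Measure α}
    {f g : α → ENNReal} (hf : AEMeasurable f μ) (hg : AEMeasurable g μ) :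
    (∫⁻ x, f x * g x ∂μ) ^ 2 ≤ (∫⁻ x, f x ^ 2 ∂μ) * ∫⁻ x, g x ^ 2 ∂μ := by
  have h := ENNReal.lintegral_mul_le_Lp_mul_Lq μ Real.HolderConjugate.two_two hf hg
  simp only [Pi.mul_apply, ENNReal.rpow_two] at h
  calc (∫⁻ x, f x * g x ∂μ) ^ 2
      ≤ ((∫⁻ x, f x ^ 2 ∂μ) ^ (1 / 2 : ℝ) * (∫⁻ x, g x ^ 2 ∂μ) ^ (1 / 2 : ℝ)) ^ 2 := by
        gcongr
    _ = (∫⁻ x, f x ^ 2 ∂μ) * ∫⁻ x, g x ^ 2 ∂μ := by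
        rw [mul_pow, ← ENNReal.rpow_natCast, ← ENNReal.rpow_natCast, ← ENNReal.rpow_mul,
          ← ENNReal.rpow_mul]
        norm_num

lemma sq_lintegral_ofReal_le_mul_lintegral_div {α : Type*} [MeasurableSpace α] {μ : Measure α}
    {g ρ : α → ℝ} (hg : AEMeasurable g μ) (hρ : AEMeasurable ρ μ) (hρ_pos : ∀ x, 0 < ρ x) :
    (∫⁻ x, ENNReal.ofReal (g x) ∂μ) ^ 2 ≤
      (∫⁻ x, ENNReal.ofReal (ρ x) ∂μ) * ∫⁻ x, ENNReal.ofReal (g x ^ 2 / ρ x) ∂μ := by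
  have hsqrt : AEMeasurable (fun x => √(ρ x)) μ := hρ.sqrt
  have hsplit : ∀ x,
      ENNReal.ofReal (g x) = ENNReal.ofReal √(ρ x) * ENNReal.ofReal (g x / √(ρ x)) := fun x => by
    rw [← ENNReal.ofReal_mul (Real.sqrt_nonneg _),
      mul_div_cancel₀ _ (Real.sqrt_pos.2 (hρ_pos x)).ne']
  simp_rw [hsplit]
  refine (ENNReal.sq_lintegral_mul_le hsqrt.ennreal_ofReal (hg.div hsqrt).ennreal_ofReal).trans ?_
  gcongr with x
  · rw [← ENNReal.ofReal_pow (Real.sqrt_nonneg _), Real.sq_sqrt (hρ_pos x).le]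
  · show ENNReal.ofReal (g x / √(ρ x)) ^ 2 ≤ _
    rw [show g x ^ 2 / ρ x = (g x / √(ρ x)) ^ 2 by rw [div_pow, Real.sq_sqrt (hρ_pos x).le]]
    rcases le_total 0 (g x / √(ρ x)) with h | h
    · rw [ENNReal.ofReal_pow h]
    · simp [ENNReal.ofReal_of_nonpos h]

lemma lintegral_const_mul_add_add {α : Type*} [MeasurableSpace α] {μ : Measure α}
    {X Y Z : α → ENNReal} (hX : AEMeasurable X μ) (hY : AEMeasurable Y μ) (k₁ k₂ : ENNReal)
    {k₃ : ENNReal} (hk₃ : k₃ ≠ ⊤) :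
    ∫⁻ x, k₁ * X x + k₂ * Y x + k₃ * Z x ∂μ =
      k₁ * ∫⁻ x, X x ∂μ + k₂ * ∫⁻ x, Y x ∂μ + k₃ * ∫⁻ x, Z x ∂μ := by
  rw [lintegral_add_left' ((hX.const_mul k₁).fun_add (hY.const_mul k₂)),
    lintegral_add_left' (hX.const_mul k₁), lintegral_const_mul'' k₁ hX,
    lintegral_const_mul'' k₂ hY, lintegral_const_mul' k₃ Z hk₃]

lemma IntervalIntegrable.monotoneOn_primitive {w : ℝ → ℝ} {a b : ℝ}
    (hint : IntervalIntegrable w volume a b) (hw : ∀ t ∈ Icc a b, 0 ≤ w t) :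
    MonotoneOn (fun t => ∫ s in a..t, w s) (Icc a b) := by
  intro s hs t ht hst
  refine integral_mono_interval le_rfl hs.1 hst ?_ (hint.mono_set ?_)
  · filter_upwards [ae_restrict_mem measurableSet_Ioc] with u hu
    exact hw u ⟨hu.1.le, hu.2.trans ht.2⟩
  · rw [uIcc_of_le ht.1, uIcc_of_le (ht.1.trans ht.2)]
    exact Icc_subset_Icc le_rfl ht.2

lemma IntervalIntegrable.aemeasurable_primitive {w : ℝ → ℝ} {a b : ℝ}
    (hint : IntervalIntegrable w volume a b) (hab : a ≤ b) :
    AEMeasurable (fun t => ∫ s in a..t, w s) (volume.restrict (Icc a b)) := by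
  have h := continuousOn_primitive_interval' hint left_mem_uIcc
  rw [uIcc_of_le hab] at h
  exact h.aemeasurable measurableSet_Icc

lemma lintegral_mul_exp_neg_primitive_le_one_s5 {w : ℝ → ℝ} {a b : ℝ} (hab : a ≤ b)
    (hw : ∀ t ∈ Icc a b, 0 ≤ w t) (hint : IntervalIntegrable w volume a b) :
    ∫⁻ t in Icc a b, ENNReal.ofReal (w t * Real.exp (-∫ s in a..t, w s)) ≤ 1 := by
  set A : ℝ → ℝ := fun t => ∫ s in a..t, w s
  set F : ℝ → ℝ := fun t => -Real.exp (-A t)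
  have hF_mono : MonotoneOn F (uIcc a b) := by
    rw [uIcc_of_le hab]
    intro s hs t ht hst
    simpa [F] using hint.monotoneOn_primitive hw hs ht hst
  have hF_deriv : ∀ᵐ t, t ∈ Ioc a b → deriv F t = w t * Real.exp (-A t) := by
    filter_upwards [hint.ae_hasDerivAt_integral] with t ht htab
    have hA : HasDerivAt A (w t) t :=
      ht (uIcc_of_le hab ▸ Ioc_subset_Icc_self htab) a left_mem_uIcc
    have hF : HasDerivAt F (-(Real.exp (-A t) * -w t)) t := hA.neg.exp.neg
    rw [hF.deriv]; ring
  have hF_deriv_nonneg : 0 ≤ᵐ[volume.restrict (Ioc a b)] deriv F := by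
    filter_upwards [ae_restrict_of_ae hF_deriv, ae_restrict_mem measurableSet_Ioc] with t ht htab
    rw [ht htab]
    exact mul_nonneg (hw t (Ioc_subset_Icc_self htab)) (Real.exp_pos _).le
  have h_increment : ∫ t in a..b, deriv F t ≤ 1 := by
    have h := hF_mono.intervalIntegral_deriv_mem_uIcc
    rw [uIcc_of_le (hF_mono left_mem_uIcc right_mem_uIcc hab |> sub_nonneg.2)] at h
    simp only [F, A, integral_same, neg_zero, Real.exp_zero] at h
    linarith [h.2, Real.exp_pos (-A b)]
  calc ∫⁻ t in Icc a b, ENNReal.ofReal (w t * Real.exp (-A t))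
      = ∫⁻ t in Ioc a b, ENNReal.ofReal (deriv F t) := by
        rw [← restrict_Ioc_eq_restrict_Icc]
        refine setLIntegral_congr_fun_ae measurableSet_Ioc ?_
        filter_upwards [hF_deriv] with t ht htab
        rw [ht htab]
    _ = ENNReal.ofReal (∫ t in a..b, deriv F t) := by
        rw [integral_of_le hab,
          ofReal_integral_eq_lintegral_ofReal hF_mono.intervalIntegrable_deriv.1 hF_deriv_nonneg]
    _ ≤ 1 := ENNReal.ofReal_le_one.mpr h_increment

lemma ofReal_sq_norm_intervalIntegral_le_s5 {E : Type*} [NormedAddCommGroup E] [NormedSpace ℝ E]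
    {g : ℝ → E} {G w : ℝ → ℝ} {a b : ℝ} (hab : a ≤ b)
    (hG : AEMeasurable G (volume.restrict (Icc a b)))
    (hw : AEMeasurable w (volume.restrict (Icc a b))) (hw_pos : ∀ t, 0 < w t)
    (hw_int : IntervalIntegrable w volume a b)
    (hg : ∀ᵐ t ∂volume.restrict (Icc a b), ‖g t‖ ≤ G t) :
    ENNReal.ofReal (‖∫ t in a..b, g t‖ ^ 2) ≤
      ∫⁻ t in Icc a b, ENNReal.ofReal (G t ^ 2 * Real.exp (∫ s in a..t, w s) / w t) := by
  set A : ℝ → ℝ := fun t => ∫ s in a..t, w s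
  set ρ : ℝ → ℝ := fun t => w t * Real.exp (-A t)
  have hρ : AEMeasurable ρ (volume.restrict (Icc a b)) :=
    hw.mul (hw_int.aemeasurable_primitive hab).neg.exp
  have hρ_pos : ∀ t, 0 < ρ t := fun t => mul_pos (hw_pos t) (Real.exp_pos _)
  calc ENNReal.ofReal (‖∫ t in a..b, g t‖ ^ 2)
      = ‖∫ t in Ioc a b, g t‖ₑ ^ 2 := by
        rw [integral_of_le hab, ENNReal.ofReal_pow (norm_nonneg _), ofReal_norm]
    _ ≤ (∫⁻ t in Icc a b, ENNReal.ofReal (G t)) ^ 2 := by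
        gcongr
        rw [← restrict_Ioc_eq_restrict_Icc] at hg ⊢
        refine (enorm_integral_le_lintegral_enorm _).trans (lintegral_mono_ae ?_)
        filter_upwards [hg] with t ht
        rw [← ofReal_norm]
        exact ENNReal.ofReal_le_ofReal ht
    _ ≤ (∫⁻ t in Icc a b, ENNReal.ofReal (ρ t)) *
          ∫⁻ t in Icc a b, ENNReal.ofReal (G t ^ 2 / ρ t) :=
        sq_lintegral_ofReal_le_mul_lintegral_div hG hρ hρ_pos
    _ ≤ 1 * ∫⁻ t in Icc a b, ENNReal.ofReal (G t ^ 2 / ρ t) := by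
        gcongr
        exact lintegral_mul_exp_neg_primitive_le_one_s5 hab (fun t _ => (hw_pos t).le) hw_int
    _ = ∫⁻ t in Icc a b, ENNReal.ofReal (G t ^ 2 * Real.exp (A t) / w t) := by
        refine (one_mul _).trans (lintegral_congr fun t => ?_)
        simp only [ρ, Real.exp_neg, div_mul_eq_div_div, div_inv_eq_mul, div_mul_eq_mul_div]

lemma sq_add_mul_div_le {w P β₁ β₂ c₁ c₂ x y z : ℝ} (hw : 0 < w) (hP : 0 ≤ P)
    (hβ₁ : 0 < β₁) (hβ₂ : 0 < β₂) (hc₁ : 0 ≤ c₁) (h₁ : β₁ * c₁ ≤ w) (h₂ : β₂ * c₂ ^ 2 ≤ w) :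
    (c₁ * x + c₂ * y + z) ^ 2 * P / w ≤
      3 / β₁ ^ 2 * (P * w * x ^ 2) + 3 / β₂ * (P * y ^ 2) + 3 * (P * z ^ 2 / w) := by
  have hc₁' : c₁ ^ 2 ≤ w ^ 2 / β₁ ^ 2 := by
    rw [le_div_iff₀ (by positivity), ← mul_pow, mul_comm]
    exact pow_le_pow_left₀ (by positivity) h₁ 2
  have hc₂' : c₂ ^ 2 ≤ w / β₂ := by rw [le_div_iff₀ hβ₂, mul_comm]; exact h₂
  have hsq : (c₁ * x + c₂ * y + z) ^ 2 ≤ 3 * (c₁ ^ 2 * x ^ 2 + c₂ ^ 2 * y ^ 2 + z ^ 2) := by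
    nlinarith [sq_nonneg (c₁ * x - c₂ * y), sq_nonneg (c₁ * x - z), sq_nonneg (c₂ * y - z)]
  calc (c₁ * x + c₂ * y + z) ^ 2 * P / w
      ≤ 3 * (c₁ ^ 2 * x ^ 2 + c₂ ^ 2 * y ^ 2 + z ^ 2) * P / w := by gcongr
    _ ≤ 3 * (w ^ 2 / β₁ ^ 2 * x ^ 2 + w / β₂ * y ^ 2 + z ^ 2) * P / w := by gcongr
    _ = 3 / β₁ ^ 2 * (P * w * x ^ 2) + 3 / β₂ * (P * y ^ 2) + 3 * (P * z ^ 2 / w) := by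
        field_simp

lemma ofReal_sq_norm_intervalIntegral_le_of_norm_le {E : Type*} [NormedAddCommGroup E]
    [NormedSpace ℝ E] {g : ℝ → E} {c₁ c₂ w x y z : ℝ → ℝ} {a b β₁ β₂ : ℝ} (hab : a ≤ b)
    (hβ₁ : 0 < β₁) (hβ₂ : 0 < β₂) (hc₁ : ∀ t, 0 ≤ c₁ t)
    (h₁ : ∀ t, β₁ * c₁ t ≤ w t) (h₂ : ∀ t, β₂ * c₂ t ^ 2 ≤ w t)
    (hc₁m : Measurable c₁) (hc₂m : Measurable c₂) (hxm : Measurable x) (hym : Measurable y)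
    (hzm : Measurable z) (hwm : Measurable w) (hw_pos : ∀ t, 0 < w t)
    (hw_int : IntervalIntegrable w volume a b)
    (hg : ∀ᵐ t ∂volume.restrict (Icc a b), ‖g t‖ ≤ c₁ t * x t + c₂ t * y t + z t) :
    ENNReal.ofReal (‖∫ t in a..b, g t‖ ^ 2) ≤
      ENNReal.ofReal (3 / β₁ ^ 2) * (∫⁻ t in Icc a b,
          ENNReal.ofReal (Real.exp (∫ s in a..t, w s) * w t * x t ^ 2)) +
        ENNReal.ofReal (3 / β₂) * (∫⁻ t in Icc a b,
          ENNReal.ofReal (Real.exp (∫ s in a..t, w s) * y t ^ 2)) +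
        3 * ∫⁻ t in Icc a b, ENNReal.ofReal (Real.exp (∫ s in a..t, w s) * z t ^ 2 / w t) := by
  have hP := (hw_int.aemeasurable_primitive hab).exp
  refine (ofReal_sq_norm_intervalIntegral_le_s5 (G := fun t => c₁ t * x t + c₂ t * y t + z t) hab
    (by fun_prop) hwm.aemeasurable hw_pos hw_int hg).trans ?_
  rw [← lintegral_const_mul_add_add (by fun_prop) (by fun_prop) _ _
    (by norm_num : (3 : ENNReal) ≠ ⊤)]
  refine lintegral_mono fun t => ?_
  have hPt := Real.exp_pos (∫ s in a..t, w s)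
  have hwt := hw_pos t
  rw [← ENNReal.ofReal_ofNat 3, ← ENNReal.ofReal_mul (by positivity),
    ← ENNReal.ofReal_mul (by positivity), ← ENNReal.ofReal_mul (by positivity),
    ← ENNReal.ofReal_add (by positivity) (by positivity),
    ← ENNReal.ofReal_add (by positivity) (by positivity)]
  exact ENNReal.ofReal_le_ofReal (sq_add_mul_div_le hwt hPt.le hβ₁ hβ₂ (hc₁ t) (h₁ t) (h₂ t))

lemma norm_apply_le_of_norm_sub_le {E F G : Type*} [SeminormedAddCommGroup E]
    [SeminormedAddCommGroup F] [SeminormedAddCommGroup G] {f : E → F → G} {c₁ c₂ : ℝ}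
    (hf : ∀ y₁ y₂ z₁ z₂, ‖f y₁ z₁ - f y₂ z₂‖ ≤ c₁ * ‖y₁ - y₂‖ + c₂ * ‖z₁ - z₂‖) (y : E) (z : F) :
    ‖f y z‖ ≤ c₁ * ‖y‖ + c₂ * ‖z‖ + ‖f 0 0‖ := by
  have h := hf y 0 z 0
  rw [sub_zero, sub_zero] at h
  linarith [norm_le_norm_add_norm_sub' (f y z) (f 0 0)]

theorem MeasureTheory.StronglyMeasurable.intervalIntegral_prod {α E : Type*}
    [MeasurableSpace α] [NormedAddCommGroup E] [NormedSpace ℝ E] {F : α → ℝ → E}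
    (hF : StronglyMeasurable (Function.uncurry F)) (a : ℝ) :
    StronglyMeasurable fun q : α × ℝ => ∫ s in a..q.2, F q.1 s := by
  have hF' : StronglyMeasurable fun p : (α × ℝ) × ℝ => F p.1.1 p.2 :=
    hF.comp_measurable (measurable_fst.fst.prodMk measurable_snd)
  have h_Ioc : ∀ l u : α × ℝ → ℝ, Measurable l → Measurable u →
      StronglyMeasurable fun q : α × ℝ => ∫ s, (Ioc (l q) (u q)).indicator (F q.1) s := by
    intro l u hl hu
    have hS : MeasurableSet {p : (α × ℝ) × ℝ | p.2 ∈ Ioc (l p.1) (u p.1)} :=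
      (_root_.measurableSet_lt (hl.comp measurable_fst) measurable_snd).inter
        (_root_.measurableSet_le measurable_snd (hu.comp measurable_fst))
    exact (hF'.indicator hS).integral_prod_right'
  simp only [intervalIntegral, ← integral_indicator measurableSet_Ioc]
  exact (h_Ioc (fun _ => a) Prod.snd measurable_const measurable_snd).sub
    (h_Ioc Prod.snd (fun _ => a) measurable_snd measurable_const)

theorem stmt_5_general {Ω : Type*} [MeasureSpace Ω]
    (T : ℝ) (hT : 0 < T) (d k : ℕ)
    (β₁ β₂ : ℝ) (hβ₁ : 4 < β₁) (hβ₂ : 90 * β₁ ^ 2 / (β₁ ^ 2 - 16) < β₂)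
    (c₁ c₂ γ : Ω → ℝ → ℝ)
    (hc₁m : Measurable (Function.uncurry c₁))
    (hc₂m : Measurable (Function.uncurry c₂))
    (hγm : Measurable (Function.uncurry γ))
    (hc₁ : ∀ ω t, 0 ≤ c₁ ω t) (hγ : ∀ ω t, 0 < γ ω t)
    (α₂ p₂ : Ω → ℝ → ℝ)
    (hα₂ : α₂ = fun ω t => γ ω t + β₁ * c₁ ω t + β₂ * c₂ ω t ^ 2)
    (hp₂ : p₂ = fun ω t => Real.exp (∫ s in (0 : ℝ)..t, α₂ ω s))
    (hα₂int : ∀ᵐ ω ∂ℙ, IntegrableOn (α₂ ω) (Set.Icc 0 T))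
    (f : Ω → ℝ → EuclideanSpace ℝ (Fin d) → EuclideanSpace ℝ (Fin d × Fin k) →
      EuclideanSpace ℝ (Fin d))
    (hfm : Measurable (fun q : Ω × ℝ × EuclideanSpace ℝ (Fin d) ×
      EuclideanSpace ℝ (Fin d × Fin k) => f q.1 q.2.1 q.2.2.1 q.2.2.2))
    (hLip : ∀ᵐ q ∂((ℙ : Measure Ω).prod (volume.restrict (Set.Icc (0 : ℝ) T))),
      ∀ y₁ y₂ : EuclideanSpace ℝ (Fin d), ∀ z₁ z₂ : EuclideanSpace ℝ (Fin d × Fin k),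
        ‖f q.1 q.2 y₁ z₁ - f q.1 q.2 y₂ z₂‖ ≤
          c₁ q.1 q.2 * ‖y₁ - y₂‖ + c₂ q.1 q.2 * ‖z₁ - z₂‖)
    (φ : Ω → ℝ → EuclideanSpace ℝ (Fin d))
    (ψ : Ω → ℝ → EuclideanSpace ℝ (Fin d × Fin k))
    (hφm : Measurable (Function.uncurry φ)) (hψm : Measurable (Function.uncurry ψ))
    (hφint : (∫⁻ ω, ∫⁻ t in Set.Icc (0 : ℝ) T,
      ENNReal.ofReal (p₂ ω t * α₂ ω t * ‖φ ω t‖ ^ 2) ∂volume ∂ℙ) < ⊤)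
    (hψint : (∫⁻ ω, ∫⁻ t in Set.Icc (0 : ℝ) T,
      ENNReal.ofReal (p₂ ω t * ‖ψ ω t‖ ^ 2) ∂volume ∂ℙ) < ⊤)
    (hfint : (∫⁻ ω, ∫⁻ t in Set.Icc (0 : ℝ) T,
      ENNReal.ofReal (p₂ ω t * ‖f ω t 0 0‖ ^ 2 / α₂ ω t) ∂volume ∂ℙ) < ⊤) :
    (∫⁻ ω, ENNReal.ofReal (‖∫ s in (0 : ℝ)..T, f ω s (φ ω s) (ψ ω s)‖ ^ 2) ∂ℙ) ≤
        ENNReal.ofReal (3 / β₁ ^ 2) * (∫⁻ ω, ∫⁻ t in Set.Icc (0 : ℝ) T,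
          ENNReal.ofReal (p₂ ω t * α₂ ω t * ‖φ ω t‖ ^ 2) ∂volume ∂ℙ) +
        ENNReal.ofReal (3 / β₂) * (∫⁻ ω, ∫⁻ t in Set.Icc (0 : ℝ) T,
          ENNReal.ofReal (p₂ ω t * ‖ψ ω t‖ ^ 2) ∂volume ∂ℙ) +
        3 * (∫⁻ ω, ∫⁻ t in Set.Icc (0 : ℝ) T,
          ENNReal.ofReal (p₂ ω t * ‖f ω t 0 0‖ ^ 2 / α₂ ω t) ∂volume ∂ℙ) ∧
    (∫⁻ ω, ENNReal.ofReal (‖∫ s in (0 : ℝ)..T, f ω s (φ ω s) (ψ ω s)‖ ^ 2) ∂ℙ) < ⊤ := by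
  have hβ₁_pos : 0 < β₁ := by linarith
  have hβ₂_pos : 0 < β₂ := lt_trans (div_pos (by positivity) (by nlinarith)) hβ₂
  have hα₂_bounds : ∀ ω t,
      0 < α₂ ω t ∧ β₁ * c₁ ω t ≤ α₂ ω t ∧ β₂ * c₂ ω t ^ 2 ≤ α₂ ω t := fun ω t => by
    have := hγ ω t; have := hc₁ ω t; have := sq_nonneg (c₂ ω t)
    rw [hα₂]; exact ⟨by positivity, by nlinarith, by nlinarith⟩
  have hα₂m : Measurable (Function.uncurry α₂) := by
    rw [hα₂]; exact (hγm.add (hc₁m.const_mul β₁)).add ((hc₂m.pow_const 2).const_mul β₂)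
  have hp₂m : Measurable (Function.uncurry p₂) := by
    rw [hp₂]; exact (hα₂m.stronglyMeasurable.intervalIntegral_prod 0).measurable.exp
  have hf₀m : Measurable fun q : Ω × ℝ => f q.1 q.2 0 0 :=
    hfm.comp (measurable_fst.prodMk (measurable_snd.prodMk (measurable_const (a := (0, 0)))))
  have hI₁ : Measurable fun ω => ∫⁻ t in Icc 0 T, ENNReal.ofReal (p₂ ω t * α₂ ω t * ‖φ ω t‖ ^ 2) :=
    ((hp₂m.mul hα₂m).mul (hφm.norm.pow_const 2)).ennreal_ofReal.lintegral_prod_right'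
  have hI₂ : Measurable fun ω => ∫⁻ t in Icc 0 T, ENNReal.ofReal (p₂ ω t * ‖ψ ω t‖ ^ 2) :=
    (hp₂m.mul (hψm.norm.pow_const 2)).ennreal_ofReal.lintegral_prod_right'
  refine ⟨?bound, (?bound).trans_lt (by finiteness)⟩
  refine (lintegral_mono_ae ?_).trans_eq (lintegral_const_mul_add_add
    hI₁.aemeasurable hI₂.aemeasurable _ _ (by norm_num : (3 : ENNReal) ≠ ⊤))
  filter_upwards [hα₂int, Measure.ae_ae_of_ae_prod hLip] with ω hint hlip
  simp only [hp₂]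
  refine ofReal_sq_norm_intervalIntegral_le_of_norm_le hT.le hβ₁_pos hβ₂_pos (hc₁ ω)
    (fun t => (hα₂_bounds ω t).2.1) (fun t => (hα₂_bounds ω t).2.2) hc₁m.of_uncurry_left
    hc₂m.of_uncurry_left hφm.of_uncurry_left.norm hψm.of_uncurry_left.norm
    (hf₀m.comp measurable_prodMk_left).norm hα₂m.of_uncurry_left (fun t => (hα₂_bounds ω t).1)
    ((intervalIntegrable_iff_integrableOn_Icc_of_le hT.le).2 hint) ?_
  filter_upwards [hlip] with t ht using norm_apply_le_of_norm_sub_le ht _ _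

/-- the a-priori estimate of Lemma 3.2(i) under conditions A2:
E|∫₀ᵀ f(s,φ,ψ) ds|² ≤ (3/β̄₁²) E∫₀ᵀ p₂α₂|φ|² + (3/β̄₂) E∫₀ᵀ p₂|ψ|²
+ 3 E∫₀ᵀ p₂|f(·,0,0)|²/α₂, and in particular the left-hand side is finite. -/
theorem stmt_5 {Ω : Type*} [MeasureSpace Ω] [IsProbabilityMeasure (ℙ : Measure Ω)]
    (T : ℝ) (hT : 0 < T) (d k : ℕ)
    (β₁ β₂ : ℝ) (hβ₁ : 4 < β₁) (hβ₂ : 90 * β₁ ^ 2 / (β₁ ^ 2 - 16) < β₂)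
    (c₁ c₂ γ : Ω → ℝ → ℝ)
    (hc₁m : Measurable (Function.uncurry c₁))
    (hc₂m : Measurable (Function.uncurry c₂))
    (hγm : Measurable (Function.uncurry γ))
    (hc₁ : ∀ ω t, 0 ≤ c₁ ω t) (hc₂ : ∀ ω t, 0 ≤ c₂ ω t) (hγ : ∀ ω t, 0 < γ ω t)
    (α₂ p₂ : Ω → ℝ → ℝ)
    (hα₂ : α₂ = fun ω t => γ ω t + β₁ * c₁ ω t + β₂ * c₂ ω t ^ 2)
    (hp₂ : p₂ = fun ω t => Real.exp (∫ s in (0 : ℝ)..t, α₂ ω s))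
    (hα₂int : ∀ᵐ ω ∂ℙ, IntegrableOn (α₂ ω) (Set.Icc 0 T))
    (f : Ω → ℝ → EuclideanSpace ℝ (Fin d) → EuclideanSpace ℝ (Fin d × Fin k) →
      EuclideanSpace ℝ (Fin d))
    (hfm : Measurable (fun q : Ω × ℝ × EuclideanSpace ℝ (Fin d) ×
      EuclideanSpace ℝ (Fin d × Fin k) => f q.1 q.2.1 q.2.2.1 q.2.2.2))
    (hLip : ∀ᵐ q ∂((ℙ : Measure Ω).prod (volume.restrict (Set.Icc (0 : ℝ) T))),
      ∀ y₁ y₂ : EuclideanSpace ℝ (Fin d), ∀ z₁ z₂ : EuclideanSpace ℝ (Fin d × Fin k),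
        ‖f q.1 q.2 y₁ z₁ - f q.1 q.2 y₂ z₂‖ ≤
          c₁ q.1 q.2 * ‖y₁ - y₂‖ + c₂ q.1 q.2 * ‖z₁ - z₂‖)
    (φ : Ω → ℝ → EuclideanSpace ℝ (Fin d))
    (ψ : Ω → ℝ → EuclideanSpace ℝ (Fin d × Fin k))
    (hφm : Measurable (Function.uncurry φ)) (hψm : Measurable (Function.uncurry ψ))
    (hφint : (∫⁻ ω, ∫⁻ t in Set.Icc (0 : ℝ) T,
      ENNReal.ofReal (p₂ ω t * α₂ ω t * ‖φ ω t‖ ^ 2) ∂volume ∂ℙ) < ⊤)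
    (hψint : (∫⁻ ω, ∫⁻ t in Set.Icc (0 : ℝ) T,
      ENNReal.ofReal (p₂ ω t * ‖ψ ω t‖ ^ 2) ∂volume ∂ℙ) < ⊤)
    (hfint : (∫⁻ ω, ∫⁻ t in Set.Icc (0 : ℝ) T,
      ENNReal.ofReal (p₂ ω t * ‖f ω t 0 0‖ ^ 2 / α₂ ω t) ∂volume ∂ℙ) < ⊤) :
    (∫⁻ ω, ENNReal.ofReal (‖∫ s in (0 : ℝ)..T, f ω s (φ ω s) (ψ ω s)‖ ^ 2) ∂ℙ) ≤
        ENNReal.ofReal (3 / β₁ ^ 2) * (∫⁻ ω, ∫⁻ t in Set.Icc (0 : ℝ) T,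
          ENNReal.ofReal (p₂ ω t * α₂ ω t * ‖φ ω t‖ ^ 2) ∂volume ∂ℙ) +
        ENNReal.ofReal (3 / β₂) * (∫⁻ ω, ∫⁻ t in Set.Icc (0 : ℝ) T,
          ENNReal.ofReal (p₂ ω t * ‖ψ ω t‖ ^ 2) ∂volume ∂ℙ) +
        3 * (∫⁻ ω, ∫⁻ t in Set.Icc (0 : ℝ) T,
          ENNReal.ofReal (p₂ ω t * ‖f ω t 0 0‖ ^ 2 / α₂ ω t) ∂volume ∂ℙ) ∧
    (∫⁻ ω, ENNReal.ofReal (‖∫ s in (0 : ℝ)..T, f ω s (φ ω s) (ψ ω s)‖ ^ 2) ∂ℙ) < ⊤ :=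
  stmt_5_general T hT d k β₁ β₂ hβ₁ hβ₂ c₁ c₂ γ hc₁m hc₂m hγm hc₁ hγ α₂ p₂ hα₂ hp₂ hα₂int f hfm hLip
    φ ψ hφm hψm hφint hψint hfint
end
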